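/- arXiv:1808.01605 — 10 statements merged into one kernel-verified Lean document; each statement's English description precedes it below -/
import Mathlib

section
/- Let k and t be positive integers and let G be a finite simple graph equipped with a linear ordering v_1 < v_2 < … < v_n of its vertices. If χ(G) > k^t and χ(N^L(v)) ≤ t for every vertex v, then G contains a triangle-free subgraph H with χ(H) > k. -/
/-!
Colour every left neighbourhood `N^L(v)` properly with `t` colours and label each edge `uv` with
`u < v` by the colour of `u` in `N^L(v)`. Every label class is triangle-free: for a triangle
`x < y < z`, the edges `xz` and `yz` carry the colours of `x` and `y` in `N^L(z)`, which differ
because `x` and `y` are adjacent. If all `t` label classes were `k`-colourable, the product of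
their colourings would properly colour `G` with `k ^ t` colours.
-/

open scoped Classical

namespace SimpleGraph

variable {V : Type*}

theorem colorable_iSup_pow {ι : Type*} [Fintype ι] {H : ι → SimpleGraph V} {k : ℕ}
    (h : ∀ i, (H i).Colorable k) : (⨆ i, H i).Colorable (k ^ Fintype.card ι) := by
  let C : (⨆ i, H i).Coloring (ι → Fin k) :=
    Coloring.mk (fun v i => (h i).some v) fun huv heq => by
      obtain ⟨i, hi⟩ := iSup_adj.1 huv
      exact (h i).some.valid hi (congrFun heq i)
  simpa using C.colorable

section LinearOrder

variable [LinearOrder V]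

theorem cliqueFree_three_of_forall_lt {H : SimpleGraph V}
    (h : ∀ x y z, x < y → y < z → H.Adj x z → H.Adj y z → ¬H.Adj x y) : H.CliqueFree 3 := by
  intro s hs
  obtain ⟨a, b, c, hab, hac, hbc, rfl⟩ := is3Clique_iff.1 hs
  rcases lt_trichotomy a b with _ | _ | _ <;> rcases lt_trichotomy b c with _ | _ | _ <;>
    rcases lt_trichotomy a c with _ | _ | _ <;> grind [adj_comm, Adj.ne]

variable (G : SimpleGraph V)

def leftNeighborSet (v : V) : Set V := {u | G.Adj u v ∧ u < v}

variable {G} {α : Type*}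

def leftEdgeLabeling (c : ∀ v, (G.induce (G.leftNeighborSet v)).Coloring α) : G.EdgeLabeling α :=
  EdgeLabeling.mk
    (fun x y h => if hxy : x < y then c y ⟨x, h, hxy⟩
      else c x ⟨y, h.symm, lt_of_le_of_ne (not_lt.1 hxy) h.ne.symm⟩)
    fun x y h => by
      rcases lt_trichotomy x y with hxy | rfl | hxy
      · simp [hxy, hxy.not_gt]
      · exact absurd rfl h.ne
      · simp [hxy, hxy.not_gt]

theorem leftEdgeLabeling_labelGraph_adj_of_lt
    (c : ∀ v, (G.induce (G.leftNeighborSet v)).Coloring α) {i : α} {x y : V} (hxy : x < y) :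
    ((leftEdgeLabeling c).labelGraph i).Adj x y ↔ ∃ h : G.Adj x y, c y ⟨x, h, hxy⟩ = i := by
  simp [EdgeLabeling.labelGraph_adj, ← EdgeLabeling.get_eq, leftEdgeLabeling,
    EdgeLabeling.get_mk, hxy]

theorem cliqueFree_three_labelGraph_leftEdgeLabeling
    (c : ∀ v, (G.induce (G.leftNeighborSet v)).Coloring α) (i : α) :
    ((leftEdgeLabeling c).labelGraph i).CliqueFree 3 :=
  cliqueFree_three_of_forall_lt fun _ _ z hxy hyz hxz_i hyz_i hxy_i => by
    obtain ⟨_, hx⟩ := (leftEdgeLabeling_labelGraph_adj_of_lt c (hxy.trans hyz)).1 hxz_i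
    obtain ⟨_, hy⟩ := (leftEdgeLabeling_labelGraph_adj_of_lt c hyz).1 hyz_i
    exact absurd (hx.trans hy.symm) ((c z).valid ((leftEdgeLabeling c).labelGraph_le hxy_i))

end LinearOrder

end SimpleGraph

open SimpleGraph

theorem rodl_lemma_left_neighborhoods_general (k t : ℕ)
    (V : Type) [LinearOrder V] (G : SimpleGraph V)
    (hchi : ((k ^ t : ℕ) : ℕ∞) < G.chromaticNumber)
    (hleft : ∀ v : V,
      (G.induce {u | G.Adj u v ∧ u < v}).chromaticNumber ≤ (t : ℕ∞)) :
    ∃ H : G.Subgraph, H.coe.CliqueFree 3 ∧ (k : ℕ∞) < H.coe.chromaticNumber := by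
  by_contra! hsmall
  let L := leftEdgeLabeling fun v => (chromaticNumber_le_iff_colorable.1 (hleft v)).some
  have hL : ∀ i, (L.labelGraph i).Colorable k := fun i => by
    let e := (Copy.ofLE _ _ (L.labelGraph_le (k := i))).isoToSubgraph
    rw [← chromaticNumber_le_iff_colorable, chromaticNumber_congr e]
    exact hsmall _ ((cliqueFree_three_labelGraph_leftEdgeLabeling _ i).comap e.isContained')
  have hG : G.Colorable (k ^ t) := by
    simpa [L.iSup_labelGraph] using colorable_iSup_pow hL
  exact hG.chromaticNumber_le.not_gt hchi

theorem rodl_lemma_left_neighborhoods (k t : ℕ) (hk : 0 < k) (ht : 0 < t)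
    (V : Type) [Fintype V] [LinearOrder V] (G : SimpleGraph V)
    (hchi : ((k ^ t : ℕ) : ℕ∞) < G.chromaticNumber)
    (hleft : ∀ v : V,
      (G.induce {u | G.Adj u v ∧ u < v}).chromaticNumber ≤ (t : ℕ∞)) :
    ∃ H : G.Subgraph, H.coe.CliqueFree 3 ∧ (k : ℕ∞) < H.coe.chromaticNumber :=
  rodl_lemma_left_neighborhoods_general k t V G hchi hleft
end

section
/- Let s > 0 be a real number, let Y be a finite set with a weight function w: Y → ℝ≥0, and enumerate Y as y_1, y_2, …, y_r in nonincreasing order of w. If X ⊆ Y is s-sparse in Y, then s·w(X) ≤ w(Y). -/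
open scoped Classical

/-- The set of the first `k` elements of the finite linearly ordered type `Y`. -/
def firstN (Y : Type) [Fintype Y] [LinearOrder Y] (k : ℕ) : Finset Y :=
  Finset.univ.filter fun y => (Finset.univ.filter fun z : Y => z < y).card < k

/-- A nonempty subset `X` of `Y` is `s`-principal in `Y` if `X ⊆ Y_{s|X|}`,
where `Y_r` denotes the set of the first `⌊r⌋` elements of `Y`. -/
def IsPrincipal {Y : Type} [Fintype Y] [LinearOrder Y] (s : ℝ) (X : Finset Y) : Prop :=
  X.Nonempty ∧ X ⊆ firstN Y ⌊s * X.card⌋₊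

/-- A subset `X` of `Y` is `s`-sparse in `Y` if `X` contains no `s`-principal subset. -/
def IsSparse {Y : Type} [Fintype Y] [LinearOrder Y] (s : ℝ) (X : Finset Y) : Prop :=
  ∀ Z ⊆ X, ¬ IsPrincipal s Z

/-!
Abel summation: an antitone nonnegative weight is a nonnegative combination of indicators of the
initial segments `{y | y ≤ x}`, so it suffices to show `s * #(X ∩ {y | y ≤ x}) ≤ #{y | y ≤ x}`.
The set `Z = X ∩ {y | y ≤ x}` is not `s`-principal, yet it lies in `{y | y ≤ x}`, which consists of
the first `#{y | y ≤ x}` elements of `Y`; hence `#{y | y ≤ x} ≥ ⌊s * #Z⌋ + 1 > s * #Z`.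
-/

open Finset

theorem Finset.sum_mul_le_sum_mul_of_sum_filter_le {α : Type*} [LinearOrder α] (S : Finset α)
    {f g w : α → ℝ} (hw0 : ∀ y ∈ S, 0 ≤ w y) (hw : AntitoneOn w S)
    (hfg : ∀ x ∈ S, ∑ y ∈ S with y ≤ x, f y ≤ ∑ y ∈ S with y ≤ x, g y) :
    ∑ y ∈ S, f y * w y ≤ ∑ y ∈ S, g y * w y := by
  induction S using Finset.induction_on_max generalizing w with
  | empty => simp
  | insert a S hlt ih =>
    have haS : a ∉ S := fun h => (hlt a h).false
    have hfilter_lt : ∀ x ∈ S, {y ∈ insert a S | y ≤ x} = {y ∈ S | y ≤ x} := fun x hx => by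
      rw [filter_insert, if_neg (hlt x hx).not_ge]
    have hfilter_max : {y ∈ insert a S | y ≤ a} = insert a S :=
      filter_true_of_mem fun y hy => (mem_insert.1 hy).elim le_of_eq fun h => (hlt y h).le
    -- Abel summation: peel off the smallest weight `w a` from every term.
    have abel : ∀ h : α → ℝ, ∑ y ∈ insert a S, h y * w y
        = ∑ y ∈ S, h y * (w y - w a) + (∑ y ∈ insert a S, h y) * w a := fun h => by
      simp only [sum_insert haS, mul_sub, sum_sub_distrib, ← sum_mul]
      ring
    have hpeeled : ∑ y ∈ S, f y * (w y - w a) ≤ ∑ y ∈ S, g y * (w y - w a) :=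
      ih (fun y hy => sub_nonneg.2 (hw (mem_insert_of_mem hy) (mem_insert_self a S) (hlt y hy).le))
        (fun x hx y hy hxy => sub_le_sub_right
          (hw (mem_insert_of_mem hx) (mem_insert_of_mem hy) hxy) _)
        (fun x hx => hfilter_lt x hx ▸ hfg x (mem_insert_of_mem hx))
    have htotal := hfg a (mem_insert_self a S)
    rw [hfilter_max] at htotal
    rw [abel f, abel g]
    exact add_le_add hpeeled (mul_le_mul_of_nonneg_right htotal (hw0 a (mem_insert_self a S)))

section

variable {Y : Type} [Fintype Y] [LinearOrder Y]

theorem filter_le_subset_firstN {x : Y} {k : ℕ} (hk : #{y | y ≤ x} ≤ k) :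
    ({y | y ≤ x} : Finset Y) ⊆ firstN Y k := by
  intro y hy
  simp only [firstN, mem_filter, mem_univ, true_and] at hy ⊢
  refine lt_of_lt_of_le (card_lt_card ?_) hk
  refine ⟨fun z hz => ?_, fun h => ?_⟩
  · simp only [mem_filter, mem_univ, true_and] at hz ⊢
    exact (hz.trans_le hy).le
  · exact (by simpa using h (by simp : x ∈ _) : x < y).not_ge hy

theorem IsSparse.mul_card_filter_le {s : ℝ} {X : Finset Y} (hX : IsSparse s X) (x : Y) :
    s * #{y ∈ X | y ≤ x} ≤ #{y | y ≤ x} := by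
  set Z := {y ∈ X | y ≤ x}
  rcases Z.eq_empty_or_nonempty with hZ | hZ
  · simp [hZ]
  have hk : ⌊s * #Z⌋₊ < #{y | y ≤ x} := by
    by_contra! hk
    refine hX Z (filter_subset _ X) ⟨hZ, fun y hy => filter_le_subset_firstN hk ?_⟩
    simpa using (mem_filter.1 hy).2
  calc s * #Z ≤ ⌊s * #Z⌋₊ + 1 := (Nat.lt_floor_add_one _).le
    _ ≤ #{y | y ≤ x} := by exact_mod_cast hk

end

theorem sparse_sets_are_light_general (s : ℝ)
    (Y : Type) [Fintype Y] [LinearOrder Y]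
    (w : Y → ℝ) (hw0 : ∀ y, 0 ≤ w y)
    (hmono : ∀ a b : Y, a < b → w b ≤ w a)
    (X : Finset Y) (hX : IsSparse s X) :
    s * ∑ y ∈ X, w y ≤ ∑ y, w y := by
  have hanti : AntitoneOn w (univ : Finset Y) := fun a _ b _ hab =>
    hab.eq_or_lt.elim (fun h => h ▸ le_rfl) (hmono a b)
  have key := univ.sum_mul_le_sum_mul_of_sum_filter_le (f := fun y => if y ∈ X then s else 0)
    (g := 1) (fun y _ => hw0 y) hanti fun x _ => by
      simpa [sum_ite, mul_comm, filter_mem_eq_inter, inter_comm, inter_filter]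
        using hX.mul_card_filter_le x
  simpa [ite_mul, sum_ite, mul_sum] using key

theorem sparse_sets_are_light (s : ℝ) (hs : 0 < s)
    (Y : Type) [Fintype Y] [LinearOrder Y]
    (w : Y → ℝ) (hw0 : ∀ y, 0 ≤ w y)
    (hmono : ∀ a b : Y, a < b → w b ≤ w a)
    (X : Finset Y) (hX : IsSparse s X) :
    s * ∑ y ∈ X, w y ≤ ∑ y, w y :=
  sparse_sets_are_light_general s Y w hw0 hmono X hX
end

section
/- Let x ≥ 3 and l ≥ 2 be real numbers, and set x' = x+1 and l' = l(1 − 1/(6(x+1))). Assume that the following holds for x', l': for every finite simple graph G' with a nonnegative weight function w' with w'(V(G')) ≠ 0, ordered nonincreasingly by w', if w'(I) ≤ w'(V(G'))/f(x',l') for every independent set I of G' and χ_f(N^L(v)) ≤ l' for every vertex v, then G' has a triangle-free spanning subgraph H' such that w'(I) ≤ w'(V(G'))/x' for every independent set I of H'. Now let G be a finite simple graph with a nonnegative weight function w with w(V(G)) ≠ 0, ordered nonincreasingly by w, such that w(I) ≤ w(V(G))/f(x,l) for every independent set I of G. Then for every (x,l)-reducible set A ⊆ V(G) there is a triangle-free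 subgraph H_A of G with vertex set A such that every independent set of H_A has weight at most w(A)/(x+1). -/
open scoped Classical

/-- The fractional chromatic number of a finite simple graph `G`. -/
noncomputable def fracChrom {V : Type} [Fintype V] (G : SimpleGraph V) : ℝ :=
  sInf { c : ℝ |
    ∃ y : Finset V → ℝ,
      (∀ I, 0 ≤ y I) ∧
      (∀ I : Finset V, y I ≠ 0 → ∀ u ∈ I, ∀ v ∈ I, ¬ G.Adj u v) ∧
      (∀ v : V, 1 ≤ ∑ I ∈ Finset.univ.filter (fun I : Finset V => v ∈ I), y I) ∧
      c = ∑ I : Finset V, y I }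

/-- The function `f(x,l) = x · (Γ(x·l⁷ + 1)/Γ(x+1))³`. -/
noncomputable def fGamma (x l : ℝ) : ℝ :=
  x * (Real.Gamma (x * l ^ 7 + 1) / Real.Gamma (x + 1)) ^ 3


/-! Restrict everything to `G[A]`. The left neighbourhoods of a vertex `v` in `G[A]` are the graphs
`L_A(v)`, so reducibility supplies the fractional-chromatic hypothesis for `(x + 1, l')`, where
`l' = l (1 - 1/(6(x+1)))`. For independent sets, `w(I) ≤ w(V)/f(x,l) ≤ w(A)/f(x+1,l')` because
`f(x,l) ≥ x (x+1)² f(x+1,l')`: the identity `Γ(x+2) = (x+1) Γ(x+1)` turns `(x+1)² f(x+1,l')` into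
`(Γ((x+1) l'⁷ + 1)/Γ(x+1))³`, and `(x+1)(1 - 1/(6(x+1)))⁷ ≤ x` keeps the Gamma argument below
`x l⁷ + 1`, in the range `[2, ∞)` where `Γ` increases. The triangle-free spanning subgraph of
`G[A]` given by the hypothesis is the required `H_A`. -/

lemma one_sub_pow_seven_le {s : ℝ} (hs0 : 0 ≤ s) (hs1 : s ≤ 1) :
    (1 - s) ^ 7 ≤ 1 - 7 * s + 21 * s ^ 2 := by
  have key : 1 - 7 * s + 21 * s ^ 2 - (1 - s) ^ 7 =
      s ^ 3 * (35 * (1 - s) + 7 * s ^ 2 * (3 - s) + s ^ 4) := by ring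
  have : 0 ≤ s ^ 3 * (35 * (1 - s) + 7 * s ^ 2 * (3 - s) + s ^ 4) := by
    apply mul_nonneg (by positivity)
    nlinarith [pow_nonneg hs0 2, pow_nonneg hs0 4]
  linarith

lemma succ_mul_one_sub_pow_seven_le {x : ℝ} (hx : 5 / 2 ≤ x) :
    (x + 1) * (1 - 1 / (6 * (x + 1))) ^ 7 ≤ x := by
  set s := 1 / (6 * (x + 1)) with hs
  have hs0 : 0 ≤ s := by positivity
  have hs21 : s ≤ 1 / 21 := by
    rw [hs, div_le_div_iff₀ (by linarith) (by norm_num)]; linarith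
  have hxs : (x + 1) * s = 1 / 6 := by rw [hs]; field_simp
  calc (x + 1) * (1 - s) ^ 7 ≤ (x + 1) * (1 - 7 * s + 21 * s ^ 2) :=
        mul_le_mul_of_nonneg_left (one_sub_pow_seven_le hs0 (by linarith)) (by linarith)
    _ = x - 1 / 6 + 7 / 2 * s := by linear_combination (-7 + 21 * s) * hxs
    _ ≤ x := by linarith

lemma fGamma_pos {x l : ℝ} (hx : 0 < x) (hl : 0 ≤ l) : 0 < fGamma x l := by
  unfold fGamma
  have := Real.Gamma_pos_of_pos (by positivity : 0 < x * l ^ 7 + 1)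
  have := Real.Gamma_pos_of_pos (by positivity : 0 < x + 1)
  positivity

lemma sq_succ_mul_fGamma_succ {x : ℝ} (hx : x + 1 ≠ 0) (l : ℝ) :
    (x + 1) ^ 2 * fGamma (x + 1) l = (Real.Gamma ((x + 1) * l ^ 7 + 1) / Real.Gamma (x + 1)) ^ 3 := by
  unfold fGamma
  rw [Real.Gamma_add_one hx]
  field_simp

lemma one_le_mul_one_sub_one_div_six_mul_succ {x l : ℝ} (hx : 0 ≤ x) (hl : 2 ≤ l) :
    1 ≤ l * (1 - 1 / (6 * (x + 1))) := by
  have : 1 / (6 * (x + 1)) ≤ 1 / 6 := by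
    rw [div_le_div_iff₀ (by linarith) (by norm_num)]; linarith
  nlinarith

lemma fGamma_succ_le {x l : ℝ} (hx : 3 ≤ x) (hl : 2 ≤ l) :
    x * (x + 1) ^ 2 * fGamma (x + 1) (l * (1 - 1 / (6 * (x + 1)))) ≤ fGamma x l := by
  set l' := l * (1 - 1 / (6 * (x + 1)))
  have hl' : 1 ≤ l' := one_le_mul_one_sub_one_div_six_mul_succ (by linarith) hl
  have harg : (x + 1) * l' ^ 7 ≤ x * l ^ 7 := by
    calc (x + 1) * l' ^ 7 = (x + 1) * (1 - 1 / (6 * (x + 1))) ^ 7 * l ^ 7 := by ring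
      _ ≤ x * l ^ 7 := by
        gcongr
        exact succ_mul_one_sub_pow_seven_le (by linarith)
  have hmem : (2 : ℝ) ≤ (x + 1) * l' ^ 7 + 1 := by nlinarith [one_le_pow₀ (n := 7) hl']
  have hGamma : Real.Gamma ((x + 1) * l' ^ 7 + 1) ≤ Real.Gamma (x * l ^ 7 + 1) :=
    Real.Gamma_strictMonoOn_Ici.monotoneOn hmem (Set.mem_Ici.mpr (by linarith)) (by linarith)
  have hpos : 0 < Real.Gamma ((x + 1) * l' ^ 7 + 1) :=
    Real.Gamma_pos_of_pos (by linarith : (0 : ℝ) < (x + 1) * l' ^ 7 + 1)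
  rw [mul_assoc, sq_succ_mul_fGamma_succ (by linarith), fGamma]
  gcongr

lemma div_le_div_of_mul_le_of_div_le {W a c f f' : ℝ} (hW : 0 ≤ W) (hc : 0 < c) (hf' : 0 < f')
    (hcf : c * f' ≤ f) (ha : W / c ≤ a) : W / f ≤ a / f' :=
  calc W / f ≤ W / (c * f') := div_le_div_of_nonneg_left hW (by positivity) hcf
    _ = W / c / f' := (div_div W c f').symm
    _ ≤ a / f' := div_le_div_of_nonneg_right ha hf'.le

section FracChrom

variable {V W : Type} [Fintype V] [Fintype W]

def fracChromValues (G : SimpleGraph V) : Set ℝ :=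
  { c : ℝ |
    ∃ y : Finset V → ℝ,
      (∀ I, 0 ≤ y I) ∧
      (∀ I : Finset V, y I ≠ 0 → ∀ u ∈ I, ∀ v ∈ I, ¬ G.Adj u v) ∧
      (∀ v : V, 1 ≤ ∑ I ∈ Finset.univ.filter (fun I : Finset V => v ∈ I), y I) ∧
      c = ∑ I : Finset V, y I }

lemma fracChromValues_bddBelow (G : SimpleGraph V) : BddBelow (fracChromValues G) := by
  refine ⟨0, ?_⟩
  rintro _ ⟨y, hy, -, -, rfl⟩
  exact Finset.sum_nonneg fun I _ => hy I

lemma fracChromValues_nonempty (G : SimpleGraph V) : (fracChromValues G).Nonempty := by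
  refine ⟨_, fun I => if I.card = 1 then 1 else 0, fun I => by positivity, ?_, fun v => ?_, rfl⟩
  · intro I hI u hu v hv
    have hI1 : I.card = 1 := by by_contra h; exact hI (if_neg h)
    obtain ⟨a, rfl⟩ := Finset.card_eq_one.mp hI1
    rw [Finset.mem_singleton] at hu hv
    subst hu hv
    exact G.irrefl
  · have hv : ({v} : Finset V) ∈ Finset.univ.filter (fun I : Finset V => v ∈ I) := by simp
    simpa using Finset.single_le_sum
      (f := fun I : Finset V => if I.card = 1 then (1 : ℝ) else 0) (fun I _ => by positivity) hv

lemma fracChromValues_subset_of_iso {G : SimpleGraph V} {H : SimpleGraph W} (e : G ≃g H) :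
    fracChromValues H ⊆ fracChromValues G := by
  rintro _ ⟨y, hy, hyind, hycov, rfl⟩
  refine ⟨fun I => y (I.map e.toEquiv.toEmbedding), fun I => hy _, ?_, fun v => ?_, ?_⟩
  · intro I hI u hu v hv hadj
    exact hyind _ hI (e u) (Finset.mem_map_of_mem _ hu) (e v) (Finset.mem_map_of_mem _ hv)
      (e.map_rel_iff.mpr hadj)
  · refine (hycov (e v)).trans_eq ?_
    rw [Finset.sum_filter, Finset.sum_filter]
    refine (Fintype.sum_equiv e.toEquiv.finsetCongr _ _ fun I => ?_).symm
    simp only [Equiv.finsetCongr_apply]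
    exact if_congr (Finset.mem_map' e.toEquiv.toEmbedding).symm rfl rfl
  · exact (Fintype.sum_equiv e.toEquiv.finsetCongr _ _ fun I => rfl).symm

lemma fracChrom_le_of_iso {G : SimpleGraph V} {H : SimpleGraph W} (e : G ≃g H) :
    fracChrom G ≤ fracChrom H :=
  csInf_le_csInf (fracChromValues_bddBelow G) (fracChromValues_nonempty H)
    (fracChromValues_subset_of_iso e)

end FracChrom

namespace SimpleGraph

variable {V : Type} {G : SimpleGraph V}

def Subgraph.ofLEInduce {s : Set V} {H : SimpleGraph s} (h : H ≤ G.induce s) : G.Subgraph where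
  verts := s
  Adj a b := ∃ (ha : a ∈ s) (hb : b ∈ s), H.Adj ⟨a, ha⟩ ⟨b, hb⟩
  adj_sub := fun ⟨_, _, hab⟩ => h hab
  edge_vert := fun ⟨ha, _, _⟩ => ha
  symm := ⟨fun _ _ ⟨ha, hb, hab⟩ => ⟨hb, ha, hab.symm⟩⟩

def Subgraph.coeOfLEInduceIso {s : Set V} {H : SimpleGraph s} (h : H ≤ G.induce s) :
    (Subgraph.ofLEInduce h).coe ≃g H where
  toEquiv := Equiv.refl s
  map_rel_iff' := ⟨fun hab => ⟨_, _, hab⟩, fun ⟨_, _, hab⟩ => hab⟩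

lemma Subgraph.cliqueFree_coe_ofLEInduce {s : Set V} {H : SimpleGraph s} (h : H ≤ G.induce s)
    {n : ℕ} (hH : H.CliqueFree n) : (Subgraph.ofLEInduce h).coe.CliqueFree n :=
  hH.comap (Subgraph.coeOfLEInduceIso h).toEmbedding.isContained

def induceLeftNeighborsIso [LinearOrder V] (G : SimpleGraph V) (A : Set V) (v : A) :
    (G.induce A).induce {u | (G.induce A).Adj u v ∧ u < v} ≃g
      G.induce {u | u ∈ A ∧ G.Adj u v ∧ u < v} where
  toFun u := ⟨u.1.1, u.1.2, u.2.1, u.2.2⟩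
  invFun u := ⟨⟨u.1, u.2.1⟩, u.2.2.1, u.2.2.2⟩
  map_rel_iff' := Iff.rfl

end SimpleGraph

theorem reducible_sets_carry_triangle_free_subgraph
    (x l : ℝ) (hx : 3 ≤ x) (hl : 2 ≤ l)
    -- hypothesis: the spanning-subgraph lemma holds for x' = x+1 and l' = l(1 - 1/(6(x+1)))
    (hyp : ∀ (V' : Type) [Fintype V'] [LinearOrder V'] (G' : SimpleGraph V')
        (w' : V' → ℝ), (∀ v, 0 ≤ w' v) → (∀ u v : V', u < v → w' v ≤ w' u) →
        (∑ v, w' v) ≠ 0 →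
        (∀ I : Finset V', (∀ u ∈ I, ∀ v ∈ I, ¬ G'.Adj u v) →
          ∑ v ∈ I, w' v ≤ (∑ v, w' v) / fGamma (x + 1) (l * (1 - 1 / (6 * (x + 1))))) →
        (∀ v : V', fracChrom (G'.induce {u | G'.Adj u v ∧ u < v}) ≤
          l * (1 - 1 / (6 * (x + 1)))) →
        ∃ H' : SimpleGraph V', H' ≤ G' ∧ H'.CliqueFree 3 ∧
          ∀ I : Finset V', (∀ u ∈ I, ∀ v ∈ I, ¬ H'.Adj u v) →
            ∑ v ∈ I, w' v ≤ (∑ v, w' v) / (x + 1))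
    (V : Type) [Fintype V] [LinearOrder V] (G : SimpleGraph V)
    (w : V → ℝ) (hw0 : ∀ v, 0 ≤ w v)
    (hmono : ∀ u v : V, u < v → w v ≤ w u)
    (hwV : ∑ v, w v ≠ 0)
    (hindep : ∀ I : Finset V, (∀ u ∈ I, ∀ v ∈ I, ¬ G.Adj u v) →
      ∑ v ∈ I, w v ≤ (∑ v, w v) / fGamma x l)
    -- A is an (x,l)-reducible set:
    (A : Finset V)
    (hA1 : (∑ v, w v) / (x * (x + 1) ^ 2) ≤ ∑ v ∈ A, w v)
    (hA2 : ∀ v ∈ A, fracChrom (G.induce {u | u ∈ A ∧ G.Adj u v ∧ u < v}) ≤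
      l * (1 - 1 / (6 * (x + 1)))) :
    ∃ H : G.Subgraph, H.verts = ↑A ∧ H.coe.CliqueFree 3 ∧
      ∀ I : Finset V, ↑I ⊆ (↑A : Set V) → (∀ u ∈ I, ∀ v ∈ I, ¬ H.Adj u v) →
        ∑ v ∈ I, w v ≤ (∑ v ∈ A, w v) / (x + 1) := by
  have hW : 0 < ∑ v, w v := (Finset.sum_nonneg fun v _ => hw0 v).lt_of_ne' hwV
  have hwA : 0 < ∑ v ∈ A, w v := lt_of_lt_of_le (by positivity) hA1
  have hf : 0 < fGamma (x + 1) (l * (1 - 1 / (6 * (x + 1)))) :=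
    fGamma_pos (by linarith)
      (zero_le_one.trans (one_le_mul_one_sub_one_div_six_mul_succ (by linarith) hl))
  have hindepA : ∀ I : Finset (A : Set V), (∀ u ∈ I, ∀ v ∈ I, ¬ (G.induce A).Adj u v) →
      ∑ v ∈ I, w v ≤ (∑ v : (A : Set V), w v) / fGamma (x + 1) (l * (1 - 1 / (6 * (x + 1)))) := by
    intro I hI
    have hmap : ∑ v ∈ I, w v = ∑ v ∈ I.map (Function.Embedding.subtype _), w v :=
      (Finset.sum_map I (Function.Embedding.subtype _) w).symm
    rw [Finset.sum_finset_coe, hmap]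
    refine (hindep _ ?_).trans (div_le_div_of_mul_le_of_div_le hW.le (by positivity) hf
      (fGamma_succ_le hx hl) hA1)
    simpa using hI
  obtain ⟨H', hH'G, hH'tf, hH'w⟩ := hyp (A : Set V) (G.induce A) (fun v => w v) (fun v => hw0 v)
    (fun u v huv => hmono u v huv) (by rw [Finset.sum_finset_coe]; exact hwA.ne') hindepA
    (fun v => (fracChrom_le_of_iso (G.induceLeftNeighborsIso A v)).trans (hA2 v v.2))
  refine ⟨.ofLEInduce hH'G, rfl, SimpleGraph.Subgraph.cliqueFree_coe_ofLEInduce hH'G hH'tf,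
    fun I hIA hI => ?_⟩
  have := hH'w (I.subtype (· ∈ (A : Set V))) fun u hu v hv huv =>
    hI u (Finset.mem_subtype.mp hu) v (Finset.mem_subtype.mp hv) ⟨u.2, v.2, huv⟩
  rwa [Finset.sum_subtype_of_mem (p := (· ∈ (A : Set V))) w hIA, Finset.sum_finset_coe] at this
end

section
/- Let x ≥ 1 and l ≥ 2 be real numbers, and define a sequence by l_0 = l and l_i = l_{i−1}·(1 − 1/(6(x+i))) for i ≥ 1. Then there exists an index i ≥ 1 with l_i < 2, and for the least such index i one has l_i > 1. -/
theorem sequence_eventually_below_two (x l : ℝ) (hx : 1 ≤ x) (hl : 2 ≤ l)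
    (L : ℕ → ℝ) (hL0 : L 0 = l)
    (hLrec : ∀ i : ℕ, L (i + 1) = L i * (1 - 1 / (6 * (x + (i + 1 : ℕ))))) :
    (∃ i : ℕ, 1 ≤ i ∧ L i < 2) ∧
    ∀ i : ℕ, 1 ≤ i → L i < 2 → (∀ j : ℕ, 1 ≤ j → j < i → ¬ L j < 2) → 1 < L i := by
  have hx0 : (0:ℝ) < x := lt_of_lt_of_le one_pos hx
  constructor
  · by_contra hcon
    push_neg at hcon
    have hge : ∀ i : ℕ, 2 ≤ L i := by
      intro i
      cases i with
      | zero => rw [hL0]; exact hl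
      | succ n => exact hcon (n+1) (Nat.succ_le_succ (Nat.zero_le n))
    have key : ∀ n : ℕ, L n ≤ l - (1/(6*x)) * ∑ k ∈ Finset.range n, (1:ℝ)/(k+1) := by
      intro n
      induction n with
      | zero => simp [hL0]
      | succ n ih =>
        have e1 : L (n+1) = L n - L n / (6*(x + ((n:ℝ)+1))) := by
          rw [hLrec n]; push_cast; ring
        have hd : (0:ℝ) < 6*(x + ((n:ℝ)+1)) := by positivity
        have hn0 : (0:ℝ) ≤ (n:ℝ) := Nat.cast_nonneg n
        have h1 : (1/(6*x)) * (1/((n:ℝ)+1)) ≤ L n / (6*(x + ((n:ℝ)+1))) := by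
          rw [div_mul_div_comm, one_mul, div_le_div_iff₀ (by positivity) hd]
          nlinarith [hge n, mul_nonneg hn0 (sub_nonneg.2 hx),
            mul_nonneg (by linarith [hge n] : (0:ℝ) ≤ L n - 2) (by positivity : (0:ℝ) ≤ 6*x*((n:ℝ)+1))]
        rw [Finset.sum_range_succ]
        push_cast
        rw [e1]
        linarith
    obtain ⟨n, hn⟩ := (Real.tendsto_sum_range_one_div_nat_succ_atTop.eventually_ge_atTop
      (6*x*(l-1))).exists
    have h2 : (1/(6*x)) * (6*x*(l-1)) ≤ (1/(6*x)) * ∑ k ∈ Finset.range n, (1:ℝ)/(k+1) := by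
      apply mul_le_mul_of_nonneg_left _ (by positivity)
      exact le_trans hn (le_of_eq rfl)
    have h3 : (1/(6*x)) * (6*x*(l-1)) = l - 1 := by field_simp
    have := key n
    have := hge n
    linarith
  · intro i hi hlt hmin
    obtain ⟨m, rfl⟩ := Nat.exists_eq_add_of_le hi
    have hprev : 2 ≤ L m := by
      cases m with
      | zero => rw [hL0]; exact hl
      | succ k =>
        have := hmin (k+1) (Nat.succ_le_succ (Nat.zero_le k)) (by omega)
        linarith [not_lt.mp this]
    have e1 : L (1 + m) = L m * (1 - 1/(6*(x + ((m:ℝ)+1)))) := by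
      have := hLrec m
      rw [Nat.add_comm 1 m] at *
      rw [this]; push_cast; ring_nf
    have hn0 : (0:ℝ) ≤ (m:ℝ) := Nat.cast_nonneg m
    have hd : (0:ℝ) < 6*(x + ((m:ℝ)+1)) := by positivity
    have ht : 1/(6*(x + ((m:ℝ)+1))) ≤ 1/12 := by
      rw [div_le_div_iff₀ hd (by norm_num)]
      nlinarith
    rw [e1]
    nlinarith [mul_nonneg (by linarith : (0:ℝ) ≤ L m - 2)
      (by linarith : (0:ℝ) ≤ 1 - 1/(6*(x + ((m:ℝ)+1))))]
end

section
/- Let x ≥ 59 and l ≥ 2 be real numbers. Let G be a finite simple graph with a weight function w: V(G) → ℝ≥0 with w(V(G)) ≠ 0, ordered nonincreasingly by w, and suppose that for each vertex v a fractional cover u_v of N^L(v) with total weight t(v) ≤ l is given as in the context. Let R̄ ⊆ V(G) be a set none of whose subsets is (x,l)-reducible. If S ⊆ R̄ contains no dense subset of R̄, then w(S) ≤ w(R̄)/(x+1) + w(V(G))/(x(x+1)). -/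
open scoped Classical

/-- The set of the first `k` elements of the finite subset `Y` of a linearly ordered type. -/
def firstOf {V : Type} [LinearOrder V] (Y : Finset V) (k : ℕ) : Finset V :=
  Y.filter fun y => (Y.filter fun z => z < y).card < k

/-- A nonempty subset `X` of `Y` is `s`-principal in `Y` if `X ⊆ Y_{s|X|}`. -/
def IsPrincipalIn {V : Type} [LinearOrder V] (Y : Finset V) (s : ℝ) (X : Finset V) : Prop :=
  X.Nonempty ∧ X ⊆ firstOf Y ⌊s * X.card⌋₊

/-- The set of type-2 vertices of `A`: those `v ∈ A` for which the total `u v`-weight of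
the independent sets disjoint from `A` exceeds `t(v)/(6(x+1))`. -/
noncomputable def typeTwo {V : Type} [Fintype V] (x : ℝ) (u : V → Finset V → ℝ)
    (A : Finset V) : Finset V :=
  A.filter fun v =>
    ¬ (∑ I ∈ Finset.univ.filter (fun I : Finset V => Disjoint I A), u v I) ≤
      (∑ I : Finset V, u v I) / (6 * (x + 1))

/-- A nonempty set `A ⊆ R̄` is dense if `A` is `(x+1)`-principal in `R̄` and
`|T₂(A)| ≤ |A|/(x+1)`. -/
noncomputable def IsDenseIn {V : Type} [Fintype V] [LinearOrder V] (x : ℝ)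
    (u : V → Finset V → ℝ) (Rbar : Finset V) (A : Finset V) : Prop :=
  A ⊆ Rbar ∧ IsPrincipalIn Rbar (x + 1) A ∧
    ((typeTwo x u A).card : ℝ) ≤ (A.card : ℝ) / (x + 1)

/-- A set `A` is `(x,l)`-reducible if `w(A) ≥ w(V)/(x(x+1)²)` and
`χ_f(L_A(v)) ≤ l(1 - 1/(6(x+1)))` for every `v ∈ A`. -/
noncomputable def IsReducible {V : Type} [Fintype V] [LinearOrder V] (x l : ℝ)
    (G : SimpleGraph V) (w : V → ℝ) (A : Finset V) : Prop :=
  (∑ v, w v) / (x * (x + 1) ^ 2) ≤ ∑ v ∈ A, w v ∧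
  ∀ v ∈ A, fracChrom (G.induce {a | a ∈ A ∧ G.Adj a v ∧ a < v}) ≤
    l * (1 - 1 / (6 * (x + 1)))

/-! Let `D ⊆ S` consist of the vertices `v` that are type 2 in `{b ∈ S | b ≤ v}`. Restricting the
cover `u v` to `L_D(v)` discards every independent set disjoint from `{b ∈ S | b ≤ v}`, and these
carry more than `t(v)/(6(x+1))`; so `D` meets the fractional-chromatic condition of reducibility,
and being a subset of `R̄` it must be light: `w(D) < w(V)/(x(x+1)²)`.

For every initial segment `P` of `R̄`, either `|S ∩ P| ≤ |P|/(x+1)`, or `S ∩ P` is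
`(x+1)`-principal, hence not dense, and its more than `|S ∩ P|/(x+1)` type-2 vertices all lie in
`D`. So `|S ∩ P| ≤ |P|/(x+1) + (x+1)|D ∩ P|` for every initial segment, and as `w` is
nonincreasing, Abel summation turns this into `w(S) ≤ w(R̄)/(x+1) + (x+1) w(D)`. -/

open Finset

lemma fracChrom_le_sum {W : Type} [Fintype W] (H : SimpleGraph W) (y : Finset W → ℝ)
    (h0 : ∀ I, 0 ≤ y I) (hind : ∀ I, y I ≠ 0 → ∀ a ∈ I, ∀ b ∈ I, ¬ H.Adj a b)
    (hcov : ∀ v, 1 ≤ ∑ I ∈ univ.filter (fun I : Finset W => v ∈ I), y I) :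
    fracChrom H ≤ ∑ I, y I :=
  csInf_le ⟨0, by rintro c ⟨y', hy', -, -, rfl⟩; exact sum_nonneg fun I _ => hy' I⟩
    ⟨y, h0, hind, hcov, rfl⟩

section FractionalCover

variable {V : Type} [Fintype V]

lemma fracChrom_induce_le (G : SimpleGraph V) (s : Set V) [Fintype s]
    (y : Finset V → ℝ) (h0 : ∀ I, 0 ≤ y I)
    (hind : ∀ I, y I ≠ 0 → ∀ a ∈ I, ∀ b ∈ I, ¬ G.Adj a b)
    (hcov : ∀ a ∈ s, 1 ≤ ∑ I ∈ univ.filter (fun I : Finset V => a ∈ I), y I) :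
    fracChrom (G.induce s) ≤
      ∑ I ∈ univ.filter (fun I : Finset V => ∃ a ∈ I, a ∈ s), y I := by
  set M := univ.filter (fun I : Finset V => ∃ a ∈ I, a ∈ s)
  let r : Finset V → Finset s := fun I => I.subtype (· ∈ s)
  rw [← sum_fiberwise M r y]
  refine fracChrom_le_sum _ _ (fun J => sum_nonneg fun I _ => h0 I) ?_ ?_
  · intro J hJ a ha b hb
    obtain ⟨I, hI, hyI⟩ := exists_ne_zero_of_sum_ne_zero hJ
    obtain rfl := (mem_filter.mp hI).2
    exact hind I hyI a (mem_subtype.mp ha) b (mem_subtype.mp hb)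
  · intro a
    rw [sum_fiberwise_eq_sum_filter]
    convert hcov a a.2 using 2
    ext I
    simpa [M, r] using fun ha => ⟨a, ha, a.2⟩

lemma mem_typeTwo_of_mem_typeTwo {x : ℝ} {u : V → Finset V → ℝ} {v : V} {A B : Finset V}
    (hu0 : ∀ I, 0 ≤ u v I) (hBA : ∀ I, u v I ≠ 0 → ∀ a ∈ I, a ∈ B → a ∈ A)
    (hvB : v ∈ B) (hv : v ∈ typeTwo x u A) : v ∈ typeTwo x u B := by
  simp only [typeTwo, mem_filter, not_le] at hv ⊢
  refine ⟨hvB, hv.2.trans_le ?_⟩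
  rw [sum_filter, sum_filter]
  refine sum_le_sum fun I _ => ?_
  by_cases hI : u v I = 0
  · simp [hI]
  by_cases hIB : Disjoint I B
  · rw [if_pos hIB]
    split_ifs
    exacts [le_rfl, hu0 I]
  · have hIA : ¬ Disjoint I A := fun hIA => hIB <| disjoint_left.mpr fun a haI haB =>
      disjoint_left.mp hIA haI (hBA I hI a haI haB)
    rw [if_neg hIA, if_neg hIB]

lemma fracChrom_le_of_mem_typeTwo (G : SimpleGraph V) {x l : ℝ} (hx : 0 ≤ x)
    {u : V → Finset V → ℝ} {v : V} (hu0 : ∀ I, 0 ≤ u v I)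
    (hind : ∀ I, u v I ≠ 0 → ∀ a ∈ I, ∀ b ∈ I, ¬ G.Adj a b) (ht : ∑ I, u v I ≤ l)
    {A : Finset V} (hv : v ∈ typeTwo x u A) (s : Set V) [Fintype s] (hsA : ∀ a ∈ s, a ∈ A)
    (hcov : ∀ a ∈ s, 1 ≤ ∑ I ∈ univ.filter (fun I : Finset V => a ∈ I), u v I) :
    fracChrom (G.induce s) ≤ l * (1 - 1 / (6 * (x + 1))) := by
  set t := ∑ I, u v I
  have hmass :
      t / (6 * (x + 1)) < ∑ I ∈ univ.filter (fun I : Finset V => Disjoint I A), u v I :=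
    not_le.mp (mem_filter.mp hv).2
  have hdisj : univ.filter (fun I : Finset V => Disjoint I A) ⊆
      univ.filter (fun I : Finset V => ¬ ∃ a ∈ I, a ∈ s) := by
    intro I hI
    simp only [mem_filter, mem_univ, true_and, not_exists, not_and] at hI ⊢
    exact fun a haI has => disjoint_left.mp hI haI (hsA a has)
  have hfactor : 0 ≤ 1 - 1 / (6 * (x + 1)) := by
    rw [sub_nonneg, div_le_one (by positivity)]
    linarith
  calc fracChrom (G.induce s)
      ≤ ∑ I ∈ univ.filter (fun I : Finset V => ∃ a ∈ I, a ∈ s), u v I :=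
        fracChrom_induce_le G s (u v) hu0 hind hcov
    _ = t - ∑ I ∈ univ.filter (fun I : Finset V => ¬ ∃ a ∈ I, a ∈ s), u v I := by
        linarith [sum_filter_add_sum_filter_not univ (fun I : Finset V => ∃ a ∈ I, a ∈ s)
          (u v)]
    _ ≤ t - ∑ I ∈ univ.filter (fun I : Finset V => Disjoint I A), u v I :=
        sub_le_sub_left (sum_le_sum_of_subset_of_nonneg hdisj fun I _ _ => hu0 I) t
    _ ≤ t * (1 - 1 / (6 * (x + 1))) := by
        rw [mul_one_sub, mul_one_div]
        linarith
    _ ≤ l * (1 - 1 / (6 * (x + 1))) := mul_le_mul_of_nonneg_right ht hfactor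

end FractionalCover

section Prefix

variable {V : Type} [LinearOrder V]

lemma sum_mul_nonneg_of_antitoneOn (R : Finset V) {g w : V → ℝ} (hw0 : ∀ v ∈ R, 0 ≤ w v)
    (hw : AntitoneOn w R)
    (hg : ∀ L : Set V, IsLowerSet L → 0 ≤ ∑ v ∈ R.filter (· ∈ L), g v) :
    0 ≤ ∑ v ∈ R, g v * w v := by
  induction R using Finset.induction_on_max generalizing w with
  | empty => simp
  | insert a R hlt ih =>
    have ha : a ∉ R := fun h => lt_irrefl a (hlt a h)
    have hgR : ∀ L : Set V, IsLowerSet L → 0 ≤ ∑ v ∈ R.filter (· ∈ L), g v := by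
      intro L hL
      convert hg (L ∩ Set.Iio a) (hL.inter (isLowerSet_Iio a)) using 2
      ext b
      simp only [mem_filter, mem_insert, Set.mem_inter_iff, Set.mem_Iio]
      constructor
      · exact fun ⟨hb, hbL⟩ => ⟨Or.inr hb, hbL, hlt b hb⟩
      · rintro ⟨rfl | hb, hbL, hba⟩
        exacts [absurd hba (lt_irrefl b), ⟨hb, hbL⟩]
    have hrest : 0 ≤ ∑ v ∈ R, g v * (w v - w a) :=
      ih (fun v hv => sub_nonneg.mpr (hw (mem_insert_of_mem hv) (mem_insert_self a R)
          (hlt v hv).le))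
        (fun b hb c hc hbc => sub_le_sub_right (hw (mem_insert_of_mem hb)
          (mem_insert_of_mem hc) hbc) _) hgR
    have htotal : 0 ≤ ∑ v ∈ insert a R, g v := by
      simpa using hg Set.univ isLowerSet_univ
    -- split off the smallest weight `w a` from every weight
    calc 0 ≤ ∑ v ∈ R, g v * (w v - w a) + (∑ v ∈ insert a R, g v) * w a :=
          add_nonneg hrest (mul_nonneg htotal (hw0 a (mem_insert_self a R)))
      _ = ∑ v ∈ insert a R, g v * w v := by
          simp only [sum_insert ha, add_mul, sum_mul, mul_sub, sum_sub_distrib]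
          ring

lemma sum_le_of_card_filter_le {R S D : Finset V} (hS : S ⊆ R) (hD : D ⊆ R) {w : V → ℝ}
    (hw0 : ∀ v ∈ R, 0 ≤ w v) (hw : AntitoneOn w R) {c C : ℝ}
    (hcount : ∀ L : Set V, IsLowerSet L →
      (#(S.filter (· ∈ L)) : ℝ) ≤ c * #(R.filter (· ∈ L)) + C * #(D.filter (· ∈ L))) :
    ∑ v ∈ S, w v ≤ c * ∑ v ∈ R, w v + C * ∑ v ∈ D, w v := by
  have key := sum_mul_nonneg_of_antitoneOn R hw0 hw
    (g := fun v => c + C * (if v ∈ D then 1 else 0) - (if v ∈ S then 1 else 0)) fun L hL => by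
      have hfilter : ∀ T ⊆ R, R.filter (· ∈ L) ∩ T = T.filter (· ∈ L) := fun T hT => by
        ext v
        simp only [mem_inter, mem_filter]
        exact ⟨fun ⟨⟨_, hvL⟩, hvT⟩ => ⟨hvT, hvL⟩,
          fun ⟨hvT, hvL⟩ => ⟨⟨hT hvT, hvL⟩, hvT⟩⟩
      simp only [sum_sub_distrib, sum_add_distrib, ← mul_sum, sum_const, nsmul_eq_mul,
        sum_ite_mem, hfilter S hS, hfilter D hD, mul_one]
      linarith [hcount L hL]
  simp only [sub_mul, add_mul, sum_sub_distrib, sum_add_distrib, ite_mul, one_mul, zero_mul,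
    mul_assoc, ← mul_sum, sum_ite_mem, inter_eq_right.mpr hS, inter_eq_right.mpr hD] at key
  linarith

lemma isPrincipalIn_of_subset_filter_lowerSet {R X : Finset V} {L : Set V} (hL : IsLowerSet L)
    {s : ℝ} (hX : X ⊆ R.filter (· ∈ L)) (hcard : (#(R.filter (· ∈ L)) : ℝ) < s * #X) :
    IsPrincipalIn R s X := by
  refine ⟨nonempty_iff_ne_empty.mpr ?_, fun v hv => ?_⟩
  · rintro rfl
    simp only [card_empty, Nat.cast_zero, mul_zero] at hcard
    exact (Nat.cast_nonneg _).not_gt hcard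
  obtain ⟨hvR, hvL⟩ := mem_filter.mp (hX hv)
  have hpred : R.filter (· < v) ⊂ R.filter (· ∈ L) := by
    refine (ssubset_iff_of_subset fun b hb => ?_).mpr ⟨v, hX hv, by simp⟩
    obtain ⟨hbR, hbv⟩ := mem_filter.mp hb
    exact mem_filter.mpr ⟨hbR, hL hbv.le hvL⟩
  exact mem_filter.mpr ⟨hvR, (card_lt_card hpred).trans_le (Nat.le_floor hcard.le)⟩

variable [Fintype V]

noncomputable def typeTwoInPrefix (x : ℝ) (u : V → Finset V → ℝ) (S : Finset V) :
    Finset V :=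
  S.filter fun v => v ∈ typeTwo x u (S.filter (· ≤ v))

lemma fracChrom_le_of_mem_typeTwoInPrefix (G : SimpleGraph V) {x l : ℝ} (hx : 0 ≤ x)
    {u : V → Finset V → ℝ} {v : V} (hu0 : ∀ I, 0 ≤ u v I)
    (hind : ∀ I, u v I ≠ 0 → ∀ a ∈ I, ∀ b ∈ I, ¬ G.Adj a b)
    (hucover : ∀ a, G.Adj a v → a < v →
      1 ≤ ∑ I ∈ univ.filter (fun I : Finset V => a ∈ I), u v I)
    (ht : ∑ I, u v I ≤ l) {S : Finset V} (hv : v ∈ typeTwoInPrefix x u S) :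
    fracChrom (G.induce {a | a ∈ typeTwoInPrefix x u S ∧ G.Adj a v ∧ a < v}) ≤
      l * (1 - 1 / (6 * (x + 1))) :=
  fracChrom_le_of_mem_typeTwo G hx hu0 hind ht (mem_filter.mp hv).2 _
    (fun _ ⟨ha, _, hav⟩ => mem_filter.mpr ⟨(mem_filter.mp ha).1, hav.le⟩)
    -- `hucover` decides `a ∈ I` with the order's `DecidableEq V`, the target classically
    fun a ⟨_, hadj, hav⟩ => by convert hucover a hadj hav

lemma typeTwo_filter_lowerSet_subset {x : ℝ} {u : V → Finset V → ℝ}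
    (hu0 : ∀ v I, 0 ≤ u v I) (hsupp : ∀ v I, u v I ≠ 0 → ∀ a ∈ I, a < v) (S : Finset V)
    {L : Set V} (hL : IsLowerSet L) :
    typeTwo x u (S.filter (· ∈ L)) ⊆ (typeTwoInPrefix x u S).filter (· ∈ L) := by
  intro v hv
  obtain ⟨hvS, hvL⟩ := mem_filter.mp (mem_filter.mp hv).1
  refine mem_filter.mpr ⟨mem_filter.mpr ⟨hvS, ?_⟩, hvL⟩
  refine mem_typeTwo_of_mem_typeTwo (hu0 v) (fun I hI a haI ha => ?_)
    (mem_filter.mpr ⟨hvS, le_rfl⟩) hv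
  exact mem_filter.mpr ⟨(mem_filter.mp ha).1, hL (hsupp v I hI a haI).le hvL⟩

lemma card_filter_lowerSet_le {x : ℝ} (hx : 0 ≤ x) {u : V → Finset V → ℝ}
    (hu0 : ∀ v I, 0 ≤ u v I) (hsupp : ∀ v I, u v I ≠ 0 → ∀ a ∈ I, a < v)
    {R S : Finset V} (hS : S ⊆ R) (hnodense : ∀ A ⊆ S, ¬ IsDenseIn x u R A)
    {L : Set V} (hL : IsLowerSet L) :
    (#(S.filter (· ∈ L)) : ℝ) ≤ (x + 1)⁻¹ * #(R.filter (· ∈ L)) +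
      (x + 1) * #((typeTwoInPrefix x u S).filter (· ∈ L)) := by
  set X := S.filter (· ∈ L)
  have hx1 : 0 < x + 1 := by linarith
  have hP : 0 ≤ (x + 1)⁻¹ * #(R.filter (· ∈ L)) := by positivity
  by_cases hsparse : (#X : ℝ) ≤ (x + 1)⁻¹ * #(R.filter (· ∈ L))
  · have : (0 : ℝ) ≤ (x + 1) * #((typeTwoInPrefix x u S).filter (· ∈ L)) := by positivity
    linarith
  have hprincipal : IsPrincipalIn R (x + 1) X := by
    refine isPrincipalIn_of_subset_filter_lowerSet hL (filter_subset_filter _ hS) ?_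
    rwa [not_le, inv_mul_lt_iff₀ hx1] at hsparse
  have hmany : (#X : ℝ) / (x + 1) < #(typeTwo x u X) := not_le.mp fun h =>
    hnodense X (filter_subset _ _) ⟨(filter_subset _ _).trans hS, hprincipal, h⟩
  have hT : (#(typeTwo x u X) : ℝ) ≤ #((typeTwoInPrefix x u S).filter (· ∈ L)) := by
    exact_mod_cast card_le_card (typeTwo_filter_lowerSet_subset hu0 hsupp S hL)
  rw [div_lt_iff₀ hx1] at hmany
  nlinarith

end Prefix

theorem weight_bound_without_dense_subsets_general
    (x l : ℝ) (hx : 59 ≤ x)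
    (V : Type) [Fintype V] [LinearOrder V] (G : SimpleGraph V)
    (w : V → ℝ) (hw0 : ∀ v, 0 ≤ w v)
    (hmono : ∀ a b : V, a < b → w b ≤ w a)
    -- for each vertex `v`, `u v` is a fractional cover of `N^L(v)` with total weight ≤ l:
    (u : V → Finset V → ℝ)
    (hu0 : ∀ v I, 0 ≤ u v I)
    (husupp : ∀ v I, u v I ≠ 0 →
      (∀ a ∈ I, G.Adj a v ∧ a < v) ∧ (∀ a ∈ I, ∀ b ∈ I, ¬ G.Adj a b))
    (hucover : ∀ v a, G.Adj a v → a < v →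
      1 ≤ ∑ I ∈ Finset.univ.filter (fun I : Finset V => a ∈ I), u v I)
    (ht : ∀ v, (∑ I : Finset V, u v I) ≤ l)
    (Rbar : Finset V)
    (hRbar : ∀ A ⊆ Rbar, ¬ IsReducible x l G w A)
    (S : Finset V) (hS : S ⊆ Rbar)
    (hnodense : ∀ A ⊆ S, ¬ IsDenseIn x u Rbar A) :
    ∑ v ∈ S, w v ≤ (∑ v ∈ Rbar, w v) / (x + 1) + (∑ v, w v) / (x * (x + 1)) := by
  have hx0 : 0 ≤ x := by linarith
  have hbefore : ∀ v I, u v I ≠ 0 → ∀ a ∈ I, a < v := fun v I hI a ha => ((husupp v I hI).1 a ha).2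
  set D := typeTwoInPrefix x u S
  have hDS : D ⊆ S := filter_subset _ _
  have hD : ∑ v ∈ D, w v < (∑ v, w v) / (x * (x + 1) ^ 2) := not_le.mp fun hheavy =>
    hRbar D (hDS.trans hS) ⟨hheavy, fun v hv => fracChrom_le_of_mem_typeTwoInPrefix G hx0
      (hu0 v) (husupp v · · |>.2) (hucover v) (ht v) hv⟩
  have hS_le :
      ∑ v ∈ S, w v ≤ (x + 1)⁻¹ * ∑ v ∈ Rbar, w v + (x + 1) * ∑ v ∈ D, w v :=
    sum_le_of_card_filter_le hS (hDS.trans hS) (fun v _ => hw0 v)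
      ((antitone_iff_forall_lt.mpr hmono).antitoneOn _)
      fun L hL => card_filter_lowerSet_le hx0 hu0 hbefore hS hnodense hL
  have hD_le : (x + 1) * ∑ v ∈ D, w v ≤ (∑ v, w v) / (x * (x + 1)) := by
    calc (x + 1) * ∑ v ∈ D, w v ≤ (x + 1) * ((∑ v, w v) / (x * (x + 1) ^ 2)) := by gcongr
      _ = (∑ v, w v) / (x * (x + 1)) := by field_simp
  rw [inv_mul_eq_div] at hS_le
  linarith

theorem weight_bound_without_dense_subsets
    (x l : ℝ) (hx : 59 ≤ x) (hl : 2 ≤ l)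
    (V : Type) [Fintype V] [LinearOrder V] (G : SimpleGraph V)
    (w : V → ℝ) (hw0 : ∀ v, 0 ≤ w v)
    (hmono : ∀ a b : V, a < b → w b ≤ w a)
    (hwV : ∑ v, w v ≠ 0)
    -- for each vertex `v`, `u v` is a fractional cover of `N^L(v)` with total weight ≤ l:
    (u : V → Finset V → ℝ)
    (hu0 : ∀ v I, 0 ≤ u v I) (hu1 : ∀ v I, u v I ≤ 1)
    (husupp : ∀ v I, u v I ≠ 0 →
      (∀ a ∈ I, G.Adj a v ∧ a < v) ∧ (∀ a ∈ I, ∀ b ∈ I, ¬ G.Adj a b))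
    (hucover : ∀ v a, G.Adj a v → a < v →
      1 ≤ ∑ I ∈ Finset.univ.filter (fun I : Finset V => a ∈ I), u v I)
    (ht : ∀ v, (∑ I : Finset V, u v I) ≤ l)
    (Rbar : Finset V)
    (hRbar : ∀ A ⊆ Rbar, ¬ IsReducible x l G w A)
    (S : Finset V) (hS : S ⊆ Rbar)
    (hnodense : ∀ A ⊆ S, ¬ IsDenseIn x u Rbar A) :
    ∑ v ∈ S, w v ≤ (∑ v ∈ Rbar, w v) / (x + 1) + (∑ v, w v) / (x * (x + 1)) :=
  weight_bound_without_dense_subsets_general x l hx V G w hw0 hmono u hu0 husupp hucover ht Rbar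
    hRbar S hS hnodense
end

section
/- Let Y be a finite set with a weight function w: Y → ℝ≥0, enumerated in nonincreasing order of w, let s > 0 be a real number, and let S ⊆ Y with induced enumeration s_1, s_2, …, s_{|S|} (so w(s_1) ≥ w(s_2) ≥ …). For 1 ≤ k ≤ |S| let S_k = {s_1, …, s_k}, and let S' = {s_k : S_k is not s-principal in Y}. Then S' is s-sparse in Y. -/
open scoped Classical

lemma mem_firstN {Y : Type} [Fintype Y] [LinearOrder Y] {k : ℕ} {y : Y} :
    y ∈ firstN Y k ↔ (Finset.univ.filter fun z : Y => z < y).card < k := by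
  simp [firstN]

lemma firstN_mono {Y : Type} [Fintype Y] [LinearOrder Y] {m n : ℕ} (h : m ≤ n) :
    firstN Y m ⊆ firstN Y n := fun y hy =>
  mem_firstN.2 (lt_of_lt_of_le (mem_firstN.1 hy) h)

lemma firstN_down {Y : Type} [Fintype Y] [LinearOrder Y] {k : ℕ} {a b : Y}
    (hba : b ≤ a) (ha : a ∈ firstN Y k) : b ∈ firstN Y k := by
  refine mem_firstN.2 (lt_of_le_of_lt ?_ (mem_firstN.1 ha))
  exact Finset.card_le_card fun z hz => by
    simp only [Finset.mem_filter, Finset.mem_univ, true_and] at hz ⊢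
    exact lt_of_lt_of_le hz hba

/-- The elements `s_k` of `S` such that the initial segment `S_k = {s_1, …, s_k}`
(equivalently, the elements of `S` that are `≤ s_k`) is not `s`-principal in `Y`
form an `s`-sparse subset of `Y`. -/
theorem non_principal_initial_segments_give_sparse_set
    (Y : Type) [Fintype Y] [LinearOrder Y]
    (w : Y → ℝ) (hw0 : ∀ y, 0 ≤ w y)
    (hmono : ∀ a b : Y, a < b → w b ≤ w a)
    (s : ℝ) (hs : 0 < s) (S : Finset Y) :
    IsSparse s (S.filter fun a => ¬ IsPrincipal s (S.filter fun b => b ≤ a)) := by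
  rintro Z hZ ⟨hne, hsub⟩
  set a := Z.max' hne with ha
  have haZ : a ∈ Z := Z.max'_mem hne
  have haS' := hZ haZ
  rw [Finset.mem_filter] at haS'
  obtain ⟨haS, hnp⟩ := haS'
  apply hnp
  set T := S.filter fun b => b ≤ a with hT
  have hZT : Z ⊆ T := by
    intro z hz
    have := hZ hz
    rw [Finset.mem_filter] at this ⊢
    exact ⟨this.1, Z.le_max' z hz⟩
  have hcard : Z.card ≤ T.card := Finset.card_le_card hZT
  refine ⟨⟨a, Finset.mem_filter.2 ⟨haS, le_refl a⟩⟩, fun b hb => ?_⟩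
  have hba : b ≤ a := (Finset.mem_filter.1 hb).2
  have ha' : a ∈ firstN Y ⌊s * Z.card⌋₊ := hsub haZ
  have hfl : ⌊s * (Z.card : ℝ)⌋₊ ≤ ⌊s * (T.card : ℝ)⌋₊ :=
    Nat.floor_le_floor (by
      apply mul_le_mul_of_nonneg_left _ hs.le
      exact_mod_cast hcard)
  exact firstN_down hba (firstN_mono hfl ha')
end

section
/- Let x be a positive integer, let G be a finite simple graph with χ(G) > x, and let m be a positive integer. Let H be a subgraph of the blow-up G^{(m)} with the following property: for every edge ab ∈ E(G) and all subsets X ⊆ B_a and Y ⊆ B_b with |X| ≥ m/x and |Y| ≥ m/x, there is an edge of H between X and Y. Then χ(H) > x. -/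
open scoped Classical

/-- The blow-up `G^{(m)}` of a graph `G` with power `m`. The blow-up of a vertex `a`
is the fiber `{a} × Fin m`. -/
def blowUp {V : Type} (G : SimpleGraph V) (m : ℕ) : SimpleGraph (V × Fin m) :=
  G.comap Prod.fst

theorem chromatic_of_dense_blowUp_subgraph
    (x : ℕ) (hx : 0 < x)
    (V : Type) [Fintype V] (G : SimpleGraph V)
    (hchi : (x : ℕ∞) < G.chromaticNumber)
    (m : ℕ) (hm : 0 < m)
    (H : SimpleGraph (V × Fin m)) (hH : H ≤ blowUp G m)
    (hprop : ∀ a b : V, G.Adj a b →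
      ∀ X Y : Finset (V × Fin m),
        (∀ p ∈ X, p.1 = a) → (∀ q ∈ Y, q.1 = b) →
        (m : ℝ) / x ≤ X.card → (m : ℝ) / x ≤ Y.card →
        ∃ p ∈ X, ∃ q ∈ Y, H.Adj p q) :
    (x : ℕ∞) < H.chromaticNumber := by
  by_contra h
  push_neg at h
  have hc : H.Colorable x := SimpleGraph.chromaticNumber_le_iff_colorable.mp h
  obtain ⟨C⟩ := hc
  -- fiber of color c in the blow-up of a
  set fib : V → Fin x → Finset (Fin m) :=
    fun a c => Finset.univ.filter (fun i => C (a, i) = c) with hfib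
  -- each vertex has a popular color
  have hpop : ∀ a : V, ∃ c : Fin x, m ≤ x * (fib a c).card := by
    intro a
    have hsum : (Finset.univ : Finset (Fin m)).card
        = ∑ c : Fin x, (fib a c).card :=
      Finset.card_eq_sum_card_fiberwise (by simp)
    have hne : (Finset.univ : Finset (Fin x)).Nonempty := by
      simpa [Finset.univ_nonempty_iff] using Fin.pos_iff_nonempty.mp hx
    obtain ⟨c, _, hcmax⟩ := Finset.exists_mem_eq_sup Finset.univ hne
      (fun c => (fib a c).card)
    refine ⟨c, ?_⟩
    have hle : ∑ c' : Fin x, (fib a c').card ≤ x * (fib a c).card := by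
      calc ∑ c' : Fin x, (fib a c').card
          ≤ (Finset.univ : Finset (Fin x)).card • (fib a c).card := by
            refine Finset.sum_le_card_nsmul _ _ _ ?_
            intro c' _
            exact (Finset.le_sup (f := fun c => (fib a c).card)
              (Finset.mem_univ c')).trans (le_of_eq hcmax)
        _ = x * (fib a c).card := by simp [smul_eq_mul]
    calc m = (Finset.univ : Finset (Fin m)).card := by simp
      _ = ∑ c' : Fin x, (fib a c').card := hsum
      _ ≤ x * (fib a c).card := hle
  choose col hcol using hpop
  -- real bound
  have hreal : ∀ a : V, (m : ℝ) / x ≤ ((fib a (col a)).card : ℝ) := by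
    intro a
    rw [div_le_iff₀ (by exact_mod_cast hx)]
    calc (m : ℝ) ≤ (x * (fib a (col a)).card : ℕ) := by exact_mod_cast hcol a
      _ = ((fib a (col a)).card : ℝ) * x := by push_cast; ring
  -- col is a proper coloring of G
  have hproper : ∀ ⦃a b : V⦄, G.Adj a b → col a ≠ col b := by
    intro a b hab heq
    set X : Finset (V × Fin m) := (fib a (col a)).image (fun i => (a, i)) with hX
    set Y : Finset (V × Fin m) := (fib b (col b)).image (fun i => (b, i)) with hY
    have hXcard : X.card = (fib a (col a)).card :=
      Finset.card_image_of_injective _ (fun i j hij => by simpa using hij)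
    have hYcard : Y.card = (fib b (col b)).card :=
      Finset.card_image_of_injective _ (fun i j hij => by simpa using hij)
    obtain ⟨p, hp, q, hq, hpq⟩ := hprop a b hab X Y
      (by intro p hp; simp [hX] at hp; obtain ⟨i, _, rfl⟩ := hp; rfl)
      (by intro q hq; simp [hY] at hq; obtain ⟨i, _, rfl⟩ := hq; rfl)
      (by rw [hXcard]; exact hreal a)
      (by rw [hYcard]; exact hreal b)
    simp [hX, hfib] at hp
    simp [hY, hfib] at hq
    obtain ⟨i, hpi, rfl⟩ := hp
    obtain ⟨j, hqj, rfl⟩ := hq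
    exact C.valid hpq (by rw [hpi, hqj, heq])
  have hGcol : G.Colorable x := ⟨SimpleGraph.Coloring.mk col (fun hab => hproper hab)⟩
  exact absurd (SimpleGraph.chromaticNumber_le_iff_colorable.mpr hGcol)
    (not_le.mpr hchi)
end

section
/- Let n, k, t, x be nonnegative integers with 0 < k < n and x < kt. Then the Kneser graph KG(nt, kt−x) contains a subgraph isomorphic to the blow-up of KG(n,k) with power C(k(t−1), x), where C(a,b) denotes the binomial coefficient. -/
open scoped Classical

def kneser (n k : ℕ) : SimpleGraph {s : Finset (Fin n) // s.card = k} :=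
  SimpleGraph.fromRel fun a b => Disjoint a.1 b.1

theorem kneser_contains_blowup (n k t x : ℕ)
    (hk : 0 < k) (hkn : k < n) (hx : x < k * t) :
    ∃ f : ({s : Finset (Fin n) // s.card = k} × Fin ((k * (t - 1)).choose x)) →
        {s : Finset (Fin (n * t)) // s.card = k * t - x},
      Function.Injective f ∧
      ∀ a b, (blowUp (kneser n k) ((k * (t - 1)).choose x)).Adj a b →
        (kneser (n * t) (k * t - x)).Adj (f a) (f b) := by
  by_cases hC : (k * (t - 1)).choose x = 0
  · exact ⟨fun p => Fin.elim0 (hC ▸ p.2), fun a b _ => Fin.elim0 (hC ▸ a.2),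
      fun a b _ => Fin.elim0 (hC ▸ a.2)⟩
  have ht : 0 < t := by
    rcases Nat.eq_zero_or_pos t with h | h
    · simp [h] at hx
    · exact h
  have hxle : x ≤ k * (t - 1) := by
    by_contra h
    exact hC (Nat.choose_eq_zero_of_lt (lt_of_not_ge h))
  set C := (k * (t - 1)).choose x with hCdef
  let z : Fin t := ⟨0, ht⟩
  let e : Fin n × Fin t ≃ Fin (n * t) := finProdFinEquiv
  let S0 : {s : Finset (Fin n) // s.card = k} → Finset (Fin n × Fin t) :=
    fun s => s.1 ×ˢ Finset.univ
  have hS0card : ∀ s, (S0 s).card = k * t := by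
    intro s
    simp [S0, Finset.card_product, s.2]
  let S1 : {s : Finset (Fin n) // s.card = k} → Finset (Fin n × Fin t) :=
    fun s => s.1 ×ˢ (Finset.univ.erase z)
  have hS1card : ∀ s, (S1 s).card = k * (t - 1) := by
    intro s
    simp [S1, Finset.card_product, Finset.card_erase_of_mem, s.2]
  have hS1sub : ∀ s, S1 s ⊆ S0 s := by
    intro s p hp
    simp only [S0, S1, Finset.mem_product] at *
    exact ⟨hp.1, Finset.mem_univ _⟩
  have hPcard : ∀ s, ((S1 s).powersetCard x).card = C := fun s => by
    rw [Finset.card_powersetCard, hS1card]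
  let A : ∀ _ : {s : Finset (Fin n) // s.card = k}, Fin C → Finset (Fin n × Fin t) := fun s i =>
    (((S1 s).powersetCard x).equivFin.symm (Fin.cast (hPcard s).symm i)).1
  have hA : ∀ s i, A s i ⊆ S1 s ∧ (A s i).card = x := fun s i => by
    have := (((S1 s).powersetCard x).equivFin.symm (Fin.cast (hPcard s).symm i)).2
    rwa [Finset.mem_powersetCard] at this
  have hAz : ∀ s i a, (a, z) ∉ A s i := by
    intro s i a hmem
    have := (hA s i).1 hmem
    simp [S1] at this
  have hcard : ∀ (p : {s : Finset (Fin n) // s.card = k} × Fin C),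
      ((S0 p.1 \ A p.1 p.2).map e.toEmbedding).card = k * t - x := by
    intro p
    rw [Finset.card_map, Finset.card_sdiff_of_subset ((hA p.1 p.2).1.trans (hS1sub p.1)),
      hS0card, (hA p.1 p.2).2]
  refine ⟨fun p => ⟨(S0 p.1 \ A p.1 p.2).map e.toEmbedding, hcard p⟩, ?_, ?_⟩
  · rintro ⟨s, i⟩ ⟨s', j⟩ hfe
    have hsets : S0 s \ A s i = S0 s' \ A s' j := by
      have := congrArg Subtype.val hfe
      exact Finset.map_injective e.toEmbedding this
    have hmemiff : ∀ (u : {s : Finset (Fin n) // s.card = k}) (iu : Fin C) (a : Fin n),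
        a ∈ u.1 ↔ (a, z) ∈ S0 u \ A u iu := by
      intro u iu a
      constructor
      · intro h
        refine Finset.mem_sdiff.2 ⟨?_, hAz u iu a⟩
        simp [S0, h]
      · intro h
        have := (Finset.mem_sdiff.1 h).1
        simp [S0] at this
        exact this
    have hss : s = s' := by
      apply Subtype.ext
      ext a
      rw [hmemiff s i a, hmemiff s' j a, hsets]
    subst hss
    have hAeq : A s i = A s j := by
      have h1 : S0 s \ (S0 s \ A s i) = A s i :=
        Finset.sdiff_sdiff_eq_self ((hA s i).1.trans (hS1sub s))
      have h2 : S0 s \ (S0 s \ A s j) = A s j :=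
        Finset.sdiff_sdiff_eq_self ((hA s j).1.trans (hS1sub s))
      rw [← h1, ← h2, hsets]
    have : i = j := by
      have := Subtype.ext hAeq
      have h2 := (((S1 s).powersetCard x).equivFin.symm.injective this)
      exact Fin.cast_injective _ h2
    rw [this]
  · rintro ⟨s, i⟩ ⟨s', j⟩ hadj
    have hadj' : (kneser n k).Adj s s' := hadj
    rw [kneser, SimpleGraph.fromRel_adj] at hadj'
    have hdisj : Disjoint s.1 s'.1 := by
      rcases hadj'.2 with h | h
      · exact h
      · exact h.symm
    have hd : Disjoint ((S0 s \ A s i).map e.toEmbedding)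
        ((S0 s' \ A s' j).map e.toEmbedding) := by
      rw [Finset.disjoint_map]
      refine Finset.disjoint_left.2 ?_
      intro p hp hp'
      have h1 := (Finset.mem_sdiff.1 hp).1
      have h2 := (Finset.mem_sdiff.1 hp').1
      simp only [S0, Finset.mem_product] at h1 h2
      exact Finset.disjoint_left.1 hdisj h1.1 h2.1
    rw [kneser, SimpleGraph.fromRel_adj]
    refine ⟨?_, Or.inl hd⟩
    intro hfe
    have hcpos : 0 < k * t - x := Nat.sub_pos_of_lt hx
    have hval : Finset.map e.toEmbedding (S0 s \ A s i)
        = Finset.map e.toEmbedding (S0 s' \ A s' j) := congrArg Subtype.val hfe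
    rw [hval] at hd
    have hemp : Finset.map e.toEmbedding (S0 s' \ A s' j) = ∅ :=
      disjoint_self.1 hd
    have hcc := hcard (s', j)
    rw [hemp, Finset.card_empty] at hcc
    omega
end

section
/- Let n, k, t, x be nonnegative integers with 0 < k < n and x < t. Then the Kneser graph KG(nt, kt−x) contains a subgraph isomorphic to the blow-up of KG(n,k) with power C(kt, x), where C(a,b) denotes the binomial coefficient. -/
open scoped Classical

noncomputable def blow (n t : ℕ) (s : Finset (Fin n)) : Finset (Fin (n * t)) :=
  (s ×ˢ (Finset.univ : Finset (Fin t))).image finProdFinEquiv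

lemma mem_blow {n t : ℕ} {s : Finset (Fin n)} {y : Fin (n * t)} :
    y ∈ blow n t s ↔ (finProdFinEquiv.symm y).1 ∈ s := by
  constructor
  · rintro h
    rcases Finset.mem_image.1 h with ⟨p, hp, rfl⟩
    rcases Finset.mem_product.1 hp with ⟨h1, _⟩
    simpa using h1
  · intro h
    exact Finset.mem_image.2 ⟨finProdFinEquiv.symm y,
      Finset.mem_product.2 ⟨h, Finset.mem_univ _⟩, finProdFinEquiv.apply_symm_apply y⟩

lemma card_blow {n t : ℕ} (s : Finset (Fin n)) : (blow n t s).card = s.card * t := by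
  rw [blow, Finset.card_image_of_injective _ finProdFinEquiv.injective,
    Finset.card_product, Finset.card_univ, Fintype.card_fin]

lemma disjoint_blow {n t : ℕ} {s s' : Finset (Fin n)} (h : Disjoint s s') :
    Disjoint (blow n t s) (blow n t s') := by
  rw [Finset.disjoint_left] at h ⊢
  intro y hy hy'
  exact h (mem_blow.1 hy) (mem_blow.1 hy')

lemma column_exists {n t x : ℕ} (hx : x < t) {s : Finset (Fin n)} {a : Fin n}
    (ha : a ∈ s) {e : Finset (Fin (n * t))} (he : e.card = x) :
    ∃ y ∈ blow n t s \ e, (finProdFinEquiv.symm y).1 = a := by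
  set col : Finset (Fin (n * t)) :=
    (({a} : Finset (Fin n)) ×ˢ (Finset.univ : Finset (Fin t))).image finProdFinEquiv with hcol
  have hcolcard : col.card = t := by
    rw [hcol, Finset.card_image_of_injective _ finProdFinEquiv.injective,
      Finset.card_product, Finset.card_singleton, Finset.card_univ, Fintype.card_fin, one_mul]
  have hsub : col ⊆ blow n t s := by
    intro y hy
    rcases Finset.mem_image.1 hy with ⟨p, hp, rfl⟩
    rcases Finset.mem_product.1 hp with ⟨h1, _⟩
    refine mem_blow.2 ?_
    simp only [Equiv.symm_apply_apply]
    exact (Finset.mem_singleton.1 h1) ▸ ha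
  have hne : (col \ e).Nonempty := by
    rw [← Finset.card_pos]
    have : e.card < col.card := by omega
    have := Finset.le_card_sdiff e col
    omega
  rcases hne with ⟨y, hy⟩
  have hy1 := Finset.mem_sdiff.1 hy
  refine ⟨y, Finset.mem_sdiff.2 ⟨hsub hy1.1, hy1.2⟩, ?_⟩
  rcases Finset.mem_image.1 hy1.1 with ⟨p, hp, rfl⟩
  rcases Finset.mem_product.1 hp with ⟨h1, _⟩
  simp only [Equiv.symm_apply_apply]
  exact Finset.mem_singleton.1 h1

theorem kneser_contains_blowup_strong (n k t x : ℕ)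
    (hk : 0 < k) (hkn : k < n) (hx : x < t) :
    ∃ f : ({s : Finset (Fin n) // s.card = k} × Fin ((k * t).choose x)) →
        {s : Finset (Fin (n * t)) // s.card = k * t - x},
      Function.Injective f ∧
      ∀ a b, (blowUp (kneser n k) ((k * t).choose x)).Adj a b →
        (kneser (n * t) (k * t - x)).Adj (f a) (f b) := by
  have hcard : ∀ v : {s : Finset (Fin n) // s.card = k}, (blow n t v.1).card = k * t := by
    intro v; rw [card_blow, v.2]
  have hP : ∀ v : {s : Finset (Fin n) // s.card = k},
      (Finset.powersetCard x (blow n t v.1)).card = (k * t).choose x := by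
    intro v; rw [Finset.card_powersetCard, hcard]
  -- enumeration of x-subsets
  let e : ∀ v : {s : Finset (Fin n) // s.card = k},
      Fin ((k * t).choose x) → Finset (Fin (n * t)) :=
    fun v i => ((Finset.equivFinOfCardEq (hP v)).symm i : Finset (Fin (n * t)))
  have he : ∀ v i, e v i ∈ Finset.powersetCard x (blow n t v.1) := fun v i =>
    ((Finset.equivFinOfCardEq (hP v)).symm i).2
  have heinj : ∀ v, Function.Injective (e v) := by
    intro v i j h
    have := Subtype.coe_injective h
    exact (Finset.equivFinOfCardEq (hP v)).symm.injective this
  have hesub : ∀ v i, e v i ⊆ blow n t v.1 := fun v i =>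
    (Finset.mem_powersetCard.1 (he v i)).1
  have hecard : ∀ v i, (e v i).card = x := fun v i =>
    (Finset.mem_powersetCard.1 (he v i)).2
  refine ⟨fun p => ⟨blow n t p.1.1 \ e p.1 p.2, ?_⟩, ?_, ?_⟩
  · rw [Finset.card_sdiff_of_subset (hesub p.1 p.2), hcard, hecard]
  · rintro ⟨v, i⟩ ⟨w, j⟩ h
    have hset : blow n t v.1 \ e v i = blow n t w.1 \ e w j := congrArg Subtype.val h
    have hvw : v = w := by
      refine Subtype.ext (Finset.Subset.antisymm ?_ ?_)
      · intro a ha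
        obtain ⟨y, hy, hy2⟩ := column_exists hx ha (hecard v i)
        rw [hset] at hy
        have := mem_blow.1 (Finset.mem_sdiff.1 hy).1
        rwa [hy2] at this
      · intro a ha
        obtain ⟨y, hy, hy2⟩ := column_exists hx ha (hecard w j)
        rw [← hset] at hy
        have := mem_blow.1 (Finset.mem_sdiff.1 hy).1
        rwa [hy2] at this
    subst hvw
    have hij : e v i = e v j := by
      have h1 : blow n t v.1 \ (blow n t v.1 \ e v i) = e v i :=
        Finset.sdiff_sdiff_eq_self (hesub v i)
      have h2 : blow n t v.1 \ (blow n t v.1 \ e v j) = e v j :=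
        Finset.sdiff_sdiff_eq_self (hesub v j)
      rw [← h1, ← h2, hset]
    exact Prod.ext rfl (heinj v hij)
  · rintro ⟨v, i⟩ ⟨w, j⟩ hadj
    have hadj' : (kneser n k).Adj v w := hadj
    rw [kneser, SimpleGraph.fromRel_adj] at hadj'
    obtain ⟨hne, hdisj⟩ := hadj'
    have hd : Disjoint v.1 w.1 := by
      rcases hdisj with h | h
      · exact h
      · exact h.symm
    have hdb : Disjoint (blow n t v.1) (blow n t w.1) := disjoint_blow hd
    have hdf : Disjoint (blow n t v.1 \ e v i) (blow n t w.1 \ e w j) :=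
      Finset.disjoint_of_subset_left Finset.sdiff_subset
        (Finset.disjoint_of_subset_right Finset.sdiff_subset hdb)
    rw [kneser, SimpleGraph.fromRel_adj]
    constructor
    · intro hEq
      have hset : blow n t v.1 \ e v i = blow n t w.1 \ e w j := congrArg Subtype.val hEq
      have hpos : 0 < (blow n t v.1 \ e v i).card := by
        rw [Finset.card_sdiff_of_subset (hesub v i), hcard, hecard]
        have : t ≤ k * t := Nat.le_mul_of_pos_left t hk
        omega
      rw [hset] at hpos
      have := (Finset.disjoint_self_iff_empty _).1 (hset ▸ hdf)
      rw [this] at hpos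
      simp at hpos
    · exact Or.inl hdf
end

section
/- Let n, k, t be nonnegative integers with 0 < k < n, t ≥ 1 and t < kt. Then the Kneser graph KG(nt, kt−t) contains a subgraph isomorphic to the blow-up of KG(n,k) with power C(kt, t) − k, where C(a,b) denotes the binomial coefficient. -/
open scoped Classical

theorem kneser_contains_blowup_boundary_case (n k t : ℕ)
    (hk : 0 < k) (hkn : k < n) (ht : 1 ≤ t) (htt : t < k * t) :
    ∃ f : ({s : Finset (Fin n) // s.card = k} × Fin ((k * t).choose t - k)) →
        {s : Finset (Fin (n * t)) // s.card = k * t - t},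
      Function.Injective f ∧
      ∀ a b, (blowUp (kneser n k) ((k * t).choose t - k)).Adj a b →
        (kneser (n * t) (k * t - t)).Adj (f a) (f b) := by
  classical
  set m := (k * t).choose t - k with hm
  set e : Fin n × Fin t ≃ Fin (n * t) := finProdFinEquiv
  set T : Finset (Fin n) → Finset (Fin (n * t)) :=
    fun S => (S ×ˢ (Finset.univ : Finset (Fin t))).image e with hT
  have hmem : ∀ S x, x ∈ T S ↔ (e.symm x).1 ∈ S := by
    intro S x
    simp only [hT, Finset.mem_image, Finset.mem_product, Finset.mem_univ, and_true]
    constructor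
    · rintro ⟨a, ha, rfl⟩; simpa using ha
    · intro h; exact ⟨e.symm x, h, e.apply_symm_apply x⟩
  have hTcard : ∀ S, (T S).card = S.card * t := by
    intro S
    rw [hT, Finset.card_image_of_injective _ e.injective,
      Finset.card_product, Finset.card_univ, Fintype.card_fin]
  have hTmono : ∀ {S S'}, S ⊆ S' → T S ⊆ T S' := by
    intro S S' h x hx
    rw [hmem] at hx ⊢; exact h hx
  have hTsub : ∀ {S S' : Finset (Fin n)} {x : Finset (Fin (n*t))},
      x ⊆ T S → x ⊆ T S' → x ⊆ T (S ∩ S') := by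
    intro S S' x h1 h2 y hy
    rw [hmem]; exact Finset.mem_inter.2 ⟨(hmem S y).1 (h1 hy), (hmem S' y).1 (h2 hy)⟩
  have hTsdiff : ∀ S S', T (S \ S') = T S \ T S' := by
    intro S S'
    ext x; simp [hmem, Finset.mem_sdiff]
  have hTdisj : ∀ {S S'}, Disjoint S S' → Disjoint (T S) (T S') := by
    intro S S' h
    rw [Finset.disjoint_left] at h ⊢
    intro x hx hx'
    exact h ((hmem S x).1 hx) ((hmem S' x).1 hx')
  -- the good complements
  set good : {s : Finset (Fin n) // s.card = k} → Finset (Finset (Fin (n * t))) :=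
    fun v => (Finset.powersetCard t (T v.1)) \ (v.1.image fun i => T {i}) with hgood
  have hgoodcard : ∀ v, m ≤ (good v).card := by
    intro v
    have h1 : (Finset.powersetCard t (T v.1)).card = (k * t).choose t := by
      rw [Finset.card_powersetCard, hTcard, v.2]
    have h2 : (v.1.image fun i => T {i}).card ≤ k := by
      calc (v.1.image fun i => T {i}).card ≤ v.1.card := Finset.card_image_le
        _ = k := v.2
    calc m = (k * t).choose t - k := hm
      _ ≤ (Finset.powersetCard t (T v.1)).card - (v.1.image fun i => T {i}).card := by
          rw [h1]; exact Nat.sub_le_sub_left h2 _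
      _ ≤ (good v).card := Finset.le_card_sdiff _ _
  set g : ∀ v : {s : Finset (Fin n) // s.card = k}, Fin m → Finset (Fin (n * t)) :=
    fun v j => ((good v).equivFin.symm (Fin.castLE (hgoodcard v) j) : Finset (Fin (n * t)))
    with hg
  have hgmem : ∀ v j, g v j ∈ good v := fun v j =>
    ((good v).equivFin.symm (Fin.castLE (hgoodcard v) j)).2
  have hginj : ∀ v, Function.Injective (g v) := by
    intro v j l h
    have := Subtype.ext h
    have := (good v).equivFin.symm.injective this
    exact Fin.castLE_injective _ this
  have hgsub : ∀ v j, g v j ⊆ T v.1 :=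
    fun v j => (Finset.mem_powersetCard.1 (Finset.mem_sdiff.1 (hgmem v j)).1).1
  have hgcardt : ∀ v j, (g v j).card = t :=
    fun v j => (Finset.mem_powersetCard.1 (Finset.mem_sdiff.1 (hgmem v j)).1).2
  have hgblock : ∀ v j, ∀ i ∈ v.1, T {i} ≠ g v j := by
    intro v j i hi heq
    exact (Finset.mem_sdiff.1 (hgmem v j)).2 (Finset.mem_image.2 ⟨i, hi, heq⟩)
  have hfcard : ∀ v (j : Fin m), (T v.1 \ g v j).card = k * t - t := by
    intro v j
    rw [Finset.card_sdiff_of_subset (hgsub v j), hTcard, v.2, hgcardt]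
  refine ⟨fun a => ⟨T a.1.1 \ g a.1 a.2, hfcard a.1 a.2⟩, ?_, ?_⟩
  · rintro ⟨v, j⟩ ⟨w, l⟩ hvw
    have heq : T v.1 \ g v j = T w.1 \ g w l := congrArg Subtype.val hvw
    have hvweq : v = w := by
      by_contra hne
      have hne' : v.1 ≠ w.1 := fun h => hne (Subtype.ext h)
      -- E is contained in T (v ∩ w)
      set E := T v.1 \ g v j with hE
      have hE1 : E ⊆ T v.1 := Finset.sdiff_subset
      have hE2 : E ⊆ T w.1 := heq ▸ Finset.sdiff_subset
      have hEsub : E ⊆ T (v.1 ∩ w.1) := hTsub hE1 hE2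
      have hEcard : E.card = k * t - t := hfcard v j
      have hinterlt : (v.1 ∩ w.1).card ≤ k - 1 := by
        have hssub : v.1 ∩ w.1 ⊆ v.1 := Finset.inter_subset_left
        have hne2 : v.1 ∩ w.1 ≠ v.1 := by
          intro h
          have : v.1 ⊆ w.1 := by
            intro x hx
            exact (Finset.mem_inter.1 (h ▸ hx)).2
          exact hne' (Finset.eq_of_subset_of_card_le this (by rw [v.2, w.2]))
        have : (v.1 ∩ w.1).card < v.1.card :=
          Finset.card_lt_card (lt_of_le_of_ne hssub hne2)
        omega
      have hTintercard : (T (v.1 ∩ w.1)).card ≤ k * t - t := by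
        rw [hTcard]
        calc (v.1 ∩ w.1).card * t ≤ (k - 1) * t := Nat.mul_le_mul_right t hinterlt
          _ = k * t - t := by rw [Nat.sub_one_mul]
      have hEeq : E = T (v.1 ∩ w.1) :=
        Finset.eq_of_subset_of_card_le hEsub (by rw [hEcard]; exact hTintercard)
      -- so g v j = T (v.1 \ w.1), and v.1 \ w.1 is a singleton
      have hgveq : g v j = T (v.1 \ (v.1 ∩ w.1)) := by
        rw [hTsdiff, ← hEeq, hE, sdiff_sdiff_eq_self (hgsub v j)]
      have hintercard : (v.1 ∩ w.1).card = k - 1 := by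
        have h1 : (v.1 \ (v.1 ∩ w.1)).card * t = t := by
          rw [← hTcard, ← hgveq, hgcardt]
        have h2 : (v.1 \ (v.1 ∩ w.1)).card = 1 := by
          have ht' : 0 < t := ht
          exact Nat.eq_of_mul_eq_mul_right ht' (by rw [h1, one_mul])
        have h3 : (v.1 \ (v.1 ∩ w.1)).card = v.1.card - (v.1 ∩ w.1).card :=
          Finset.card_sdiff_of_subset Finset.inter_subset_left
        rw [v.2] at h3
        omega
      obtain ⟨i, hi⟩ := Finset.card_eq_one.1 (by
        have h3 : (v.1 \ (v.1 ∩ w.1)).card = v.1.card - (v.1 ∩ w.1).card :=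
          Finset.card_sdiff_of_subset Finset.inter_subset_left
        rw [v.2, hintercard] at h3
        rw [h3]; omega)
      have hiv : i ∈ v.1 := by
        have : i ∈ v.1 \ (v.1 ∩ w.1) := hi ▸ Finset.mem_singleton_self i
        exact (Finset.mem_sdiff.1 this).1
      exact hgblock v j i hiv (by rw [hgveq, hi])
    subst hvweq
    have hgeq : g v j = g v l := by
      have h1 : T v.1 \ (T v.1 \ g v j) = g v j := sdiff_sdiff_eq_self (hgsub v j)
      have h2 : T v.1 \ (T v.1 \ g v l) = g v l := sdiff_sdiff_eq_self (hgsub v l)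
      rw [← h1, ← h2, heq]
    rw [hginj v hgeq]
  · rintro ⟨v, j⟩ ⟨w, l⟩ hadj
    have hadj' : (kneser n k).Adj v w := hadj
    rw [kneser, SimpleGraph.fromRel_adj] at hadj'
    obtain ⟨hne, hdisj⟩ := hadj'
    have hdisj' : Disjoint v.1 w.1 := by
      rcases hdisj with h | h
      · exact h
      · exact h.symm
    rw [kneser, SimpleGraph.fromRel_adj]
    constructor
    · intro h
      have := congrArg Subtype.val h
      simp only at this
      have hvsub : T v.1 \ g v j ⊆ T v.1 := Finset.sdiff_subset
      have hwsub : T v.1 \ g v j ⊆ T w.1 := this ▸ Finset.sdiff_subset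
      have : T v.1 \ g v j ⊆ T (v.1 ∩ w.1) := hTsub hvsub hwsub
      rw [Finset.disjoint_iff_inter_eq_empty.1 hdisj'] at this
      have hTempty : T (∅ : Finset (Fin n)) = ∅ := by
        ext x; simp [hmem]
      rw [hTempty, Finset.subset_empty] at this
      have hc := hfcard v j
      rw [this, Finset.card_empty] at hc
      omega
    · left
      exact Finset.disjoint_of_subset_left Finset.sdiff_subset
        (Finset.disjoint_of_subset_right Finset.sdiff_subset (hTdisj hdisj'))
end
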